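/- arXiv:2207.14414 — 2 statements merged into one kernel-verified Lean document; each statement's English description precedes it below -/
import Mathlib

section
/- The set S consisting of vertices (i,j) of C_10 □ P_12 listed as: row 0: columns 2,4,7,9; row 1: columns 0,5; row 2: columns 3,8; row 3: columns 1,6; row 4: columns 4,9; row 5: columns 2,7; row 6: columns 0,5; row 7: columns 3,8; row 8: columns 1,6; row 9: columns 4,9; row 10: columns 2,7; row 11: columns 0,3,5,8, is a dominating set of C_10 □ P_12 of size 28. -/
open SimpleGraph

/-- Closed neighborhood of a set of vertices: the set plus everything adjacent to it. -/
def closedNbhd {V : Type*} (G : SimpleGraph V) (S : Set V) : Set V :=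
  {v | v ∈ S ∨ ∃ u ∈ S, G.Adj u v}

/-- Wasted domination of a set. -/
noncomputable def waste {V : Type*} (G : SimpleGraph V) (S : Set V) : ℤ :=
  5 * S.ncard - (closedNbhd G S).ncard

/-- A dominating set. -/
def IsDomSet {V : Type*} (G : SimpleGraph V) (S : Set V) : Prop :=
  ∀ v, v ∈ S ∨ ∃ u ∈ S, G.Adj u v

/-- The domination number of a graph. -/
noncomputable def domNum {V : Type*} (G : SimpleGraph V) : ℕ :=
  sInf {k | ∃ S : Set V, S.Finite ∧ S.ncard = k ∧ IsDomSet G S}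

def domSet28 : Set (Fin 10 × Fin 12) :=
  {(2,0), (4,0), (7,0), (9,0),
   (0,1), (5,1),
   (3,2), (8,2),
   (1,3), (6,3),
   (4,4), (9,4),
   (2,5), (7,5),
   (0,6), (5,6),
   (3,7), (8,7),
   (1,8), (6,8),
   (4,9), (9,9),
   (2,10), (7,10),
   (0,11), (3,11), (5,11), (8,11)}

instance pathAdjDec : DecidableRel (pathGraph 12).Adj :=
  fun _ _ => decidable_of_iff _ (pathGraph_adj).symm

instance boxAdjDec : DecidableRel (cycleGraph 10 □ pathGraph 12).Adj :=
  fun _ _ => decidable_of_iff _ (boxProd_adj).symm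

def domFinset28 : Finset (Fin 10 × Fin 12) :=
  {(2,0), (4,0), (7,0), (9,0),
   (0,1), (5,1),
   (3,2), (8,2),
   (1,3), (6,3),
   (4,4), (9,4),
   (2,5), (7,5),
   (0,6), (5,6),
   (3,7), (8,7),
   (1,8), (6,8),
   (4,9), (9,9),
   (2,10), (7,10),
   (0,11), (3,11), (5,11), (8,11)}

lemma domSet28_eq : domSet28 = ↑domFinset28 := by
  ext v; simp [domSet28, domFinset28]

set_option maxRecDepth 10000 in
theorem stmt9 :
    domSet28.ncard = 28 ∧ IsDomSet (cycleGraph 10 □ pathGraph 12) domSet28 := by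
  constructor
  · rw [domSet28_eq, Set.ncard_coe_finset]; decide
  · intro v
    simp only [domSet28_eq, Finset.mem_coe]
    revert v
    decide
end

section
/- Suppose that for every subset A of vertices of C_n □ P_m that dominates all vertices except possibly some in the top and bottom rows, the wasted domination w(A) = 5|A| − |N[A]| (computed in C_n □ P_{m+2} with the cylinder occupying the middle m rows) is at least a. Then for any t disjoint such blocks stacked to form C_n □ P_{tm}, every dominating set S of C_n □ P_{tm} satisfies |S| ≥ (tmn + (t−2)a)/5, provided the two boundary blocks contribute waste at least 0. -/
open SimpleGraph

/-!
Cut the cylinder `C_n □ P_{tm}` into `t` blocks of `m` consecutive rows and transport the part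
`S_k` of the dominating set `S` lying in block `k` to the middle rows of `C_n □ P_{m+2}`. Every
vertex of the cylinder is dominated by some vertex of some `S_k`, and the block with its two
neighbouring rows embeds in `C_n □ P_{m+2}` preserving adjacency, so `Σ |N[S_k]| ≥ tmn`; together
with `Σ |S_k| ≤ |S|` this gives `5 |S| - tmn ≥ Σ w(S_k)`. Each `S_k` dominates the interior rows
of its block, so `w(S_k) ≥ a`; since vertices have degree at most `4`, also `w(S_k) ≥ 0`, whence
`Σ w(S_k) ≥ (t - 2) a`.
-/

namespace SimpleGraph

lemma degree_cycleGraph_le_two {n : ℕ} (v : Fin n) : (cycleGraph n).degree v ≤ 2 := by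
  match n with
  | 0 => exact v.elim0
  | 1 => simp [cycleGraph_one_eq_bot]
  | n + 2 => exact cycleGraph_degree_two_le.trans_le Finset.card_le_two

open scoped Classical in
lemma degree_pathGraph_le_two {n : ℕ} (v : Fin n) : (pathGraph n).degree v ≤ 2 :=
  (degree_le_of_le pathGraph_le_cycleGraph).trans (degree_cycleGraph_le_two v)

open scoped Classical in
lemma degree_cycleGraph_boxProd_pathGraph_le {n m : ℕ} (v : Fin n × Fin m) :
    (cycleGraph n □ pathGraph m).degree v ≤ 4 := by
  rw [degree_boxProd]
  linarith [degree_cycleGraph_le_two v.1, degree_pathGraph_le_two v.2]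

end SimpleGraph

section ClosedNbhd

variable {V : Type*}

lemma closedNbhd_eq_biUnion (G : SimpleGraph V) (A : Set V) :
    closedNbhd G A = ⋃ v ∈ A, insert v (G.neighborSet v) := by
  ext w
  simp only [closedNbhd, Set.mem_ofPred_eq, Set.mem_iUnion, Set.mem_insert_iff,
    SimpleGraph.mem_neighborSet, exists_prop]
  constructor
  · rintro (hw | ⟨u, hu, huw⟩)
    exacts [⟨w, hw, Or.inl rfl⟩, ⟨u, hu, Or.inr huw⟩]
  · rintro ⟨u, hu, rfl | huw⟩
    exacts [Or.inl hu, Or.inr ⟨u, hu, huw⟩]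

lemma ncard_closedNbhd_le [Finite V] (G : SimpleGraph V) [G.LocallyFinite] {d : ℕ}
    (hd : ∀ v, G.degree v ≤ d) (A : Set V) :
    (closedNbhd G A).ncard ≤ (d + 1) * A.ncard := by
  have hA := A.toFinite
  calc (closedNbhd G A).ncard
      = (⋃ v ∈ hA.toFinset, insert v (G.neighborSet v)).ncard := by
        simp only [closedNbhd_eq_biUnion, Set.Finite.mem_toFinset]
    _ ≤ ∑ v ∈ hA.toFinset, (insert v (G.neighborSet v)).ncard := Finset.set_ncard_biUnion_le _ _
    _ ≤ ∑ _v ∈ hA.toFinset, (d + 1) := by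
        refine Finset.sum_le_sum fun v _ => (Set.ncard_insert_le _ _).trans ?_
        rw [← coe_neighborFinset, Set.ncard_coe_finset, card_neighborFinset_eq_degree]
        exact Nat.succ_le_succ (hd v)
    _ = (d + 1) * A.ncard := by
        rw [Finset.sum_const, smul_eq_mul, mul_comm, Set.ncard_eq_toFinset_card A hA]

lemma waste_nonneg [Finite V] (G : SimpleGraph V) [G.LocallyFinite]
    (hd : ∀ v, G.degree v ≤ 4) (A : Set V) : 0 ≤ waste G A := by
  have := ncard_closedNbhd_le G hd A
  unfold waste
  omega

end ClosedNbhd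

lemma IsDomSet.exists_mem_eq_or_adj {V : Type*} {G : SimpleGraph V} {S : Set V}
    (hS : IsDomSet G S) (v : V) : ∃ u ∈ S, u = v ∨ G.Adj u v := by
  rcases hS v with hv | ⟨u, hu, huv⟩
  exacts [⟨v, hv, Or.inl rfl⟩, ⟨u, hu, Or.inr huv⟩]

section Blocks

variable {V : Type*} {m N k : ℕ}

lemma snd_le_succ_of_eq_or_adj {H : SimpleGraph V} {u v : V × Fin N}
    (huv : u = v ∨ (H □ pathGraph N).Adj u v) : (u.2 : ℕ) ≤ v.2 + 1 ∧ (v.2 : ℕ) ≤ u.2 + 1 := by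
  rcases huv with rfl | huv
  · omega
  · rcases boxProd_adj.mp huv with ⟨-, h⟩ | ⟨h, -⟩
    · rw [h]; omega
    · rw [pathGraph_adj] at h; omega

/-- Global row `k * m + i - 1` becomes local row `i`, so block `k` (rows `k * m, …, k * m + m - 1`)
lands on the middle rows `1, …, m`. Outside `blockWindow m k` the value is junk (truncated
subtraction, reduction modulo `m + 2`). -/
def toBlock (m k : ℕ) (q : V × Fin N) : V × Fin (m + 2) :=
  (q.1, Fin.ofNat (m + 2) (q.2 + 1 - k * m))

/-- Block `k` together with its two neighbouring rows `k * m - 1` and `k * m + m`. -/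
def blockWindow (m k : ℕ) : Set (V × Fin N) :=
  {q | k * m ≤ q.2 + 1 ∧ (q.2 : ℕ) ≤ k * m + m}

lemma toBlock_snd_add {q : V × Fin N} (hq : q ∈ blockWindow m k) :
    ((toBlock m k q).2 : ℕ) + k * m = q.2 + 1 := by
  obtain ⟨h₁, h₂⟩ := hq
  simp only [toBlock, Fin.val_ofNat]
  rw [Nat.mod_eq_of_lt (by omega)]
  omega

lemma injOn_toBlock : Set.InjOn (toBlock (V := V) (N := N) m k) (blockWindow m k) := by
  intro q hq q' hq' h
  have h₁ : q.1 = q'.1 := (Prod.ext_iff.mp h).1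
  have h₂ := toBlock_snd_add hq
  rw [h, toBlock_snd_add hq'] at h₂
  exact Prod.ext h₁ (Fin.ext (by omega))

lemma toBlock_adj {H : SimpleGraph V} {q q' : V × Fin N} (hq : q ∈ blockWindow m k)
    (hq' : q' ∈ blockWindow m k) (h : (H □ pathGraph N).Adj q q') :
    (H □ pathGraph (m + 2)).Adj (toBlock m k q) (toBlock m k q') := by
  have e := toBlock_snd_add hq
  have e' := toBlock_snd_add hq'
  rw [boxProd_adj] at h ⊢
  rcases h with ⟨hH, h⟩ | ⟨hP, h⟩
  · exact Or.inl ⟨hH, by simp only [toBlock, h]⟩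
  · rw [pathGraph_adj] at hP ⊢
    exact Or.inr ⟨by omega, h⟩

lemma toBlock_mem_closedNbhd {H : SimpleGraph V} {A : Set (V × Fin N)} {u v : V × Fin N}
    (hu : u ∈ A) (hu' : u ∈ blockWindow m k) (hv : v ∈ blockWindow m k)
    (huv : u = v ∨ (H □ pathGraph N).Adj u v) :
    toBlock m k v ∈ closedNbhd (H □ pathGraph (m + 2)) (toBlock m k '' A) := by
  rcases huv with rfl | huv
  · exact Or.inl ⟨u, hu, rfl⟩
  · exact Or.inr ⟨_, ⟨u, hu, rfl⟩, toBlock_adj hu' hv huv⟩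

/-- The paper's `S_k`. -/
def blockPart (S : Set (V × Fin N)) (m k : ℕ) : Set (V × Fin (m + 2)) :=
  toBlock m k '' (S ∩ {q | (q.2 : ℕ) / m = k})

lemma mem_blockWindow_of_div_eq (hm : 0 < m) {q : V × Fin N} (hq : (q.2 : ℕ) / m = k) :
    q ∈ blockWindow m k ∧ k * m + 1 ≤ q.2 + 1 ∧ (q.2 : ℕ) + 1 ≤ k * m + m := by
  rw [Nat.div_eq_iff hm] at hq
  refine ⟨⟨?_, ?_⟩, ?_, ?_⟩ <;> omega

lemma blockPart_rows (hm : 0 < m) (S : Set (V × Fin N)) :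
    ∀ p ∈ blockPart S m k, 1 ≤ (p.2 : ℕ) ∧ (p.2 : ℕ) ≤ m := by
  rintro _ ⟨q, ⟨-, hq⟩, rfl⟩
  obtain ⟨hw, h₁, h₂⟩ := mem_blockWindow_of_div_eq hm hq
  have := toBlock_snd_add hw
  omega

lemma mem_closedNbhd_blockPart {H : SimpleGraph V} {S : Set (V × Fin N)}
    (hS : IsDomSet (H □ pathGraph N) S) (hk : k * m + m ≤ N) (p : V × Fin (m + 2))
    (hp₁ : 2 ≤ (p.2 : ℕ)) (hp₂ : (p.2 : ℕ) ≤ m - 1) :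
    p ∈ closedNbhd (H □ pathGraph (m + 2)) (blockPart S m k) := by
  let q : V × Fin N := (p.1, ⟨k * m + p.2 - 1, by omega⟩)
  have hq₂ : (q.2 : ℕ) = k * m + p.2 - 1 := rfl
  have hq : q ∈ blockWindow m k := ⟨by omega, by omega⟩
  have hpq : toBlock m k q = p := by
    have := toBlock_snd_add hq
    exact Prod.ext rfl (Fin.ext (by omega))
  obtain ⟨u, hu, huq⟩ := hS.exists_mem_eq_or_adj q
  have hrow := snd_le_succ_of_eq_or_adj huq
  have hdiv : (u.2 : ℕ) / m = k := by
    rw [Nat.div_eq_iff (by omega)]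
    omega
  rw [← hpq]
  exact toBlock_mem_closedNbhd ⟨hu, hdiv⟩ (mem_blockWindow_of_div_eq (by omega) hdiv).1 hq huq

end Blocks

lemma Set.sum_ncard_inter_fiber_le {α β : Type*} [Finite α] (s : Set α)
    (f : α → β) (T : Finset β) : ∑ b ∈ T, (s ∩ {a | f a = b}).ncard ≤ s.ncard := by
  classical
  have := Fintype.ofFinite α
  simp only [Set.ncard_eq_toFinset_card', Set.toFinset_inter, Set.toFinset_ofPred]
  simp only [Finset.inter_filter, Finset.inter_univ]
  exact (Finset.sum_card_fiberwise_eq_card_filter _ _ _).le.trans (Finset.card_filter_le _ _)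

lemma sub_two_mul_le_sum {ι : Type*} {s : Finset ι} (hs : 2 ≤ s.card) {a : ℤ} {f : ι → ℤ}
    (ha : ∀ i ∈ s, a ≤ f i) (h0 : ∀ i ∈ s, 0 ≤ f i) : ((s.card : ℤ) - 2) * a ≤ ∑ i ∈ s, f i := by
  rcases le_or_gt a 0 with ha₀ | ha₀
  · exact (mul_nonpos_of_nonneg_of_nonpos (by omega) ha₀).trans (Finset.sum_nonneg h0)
  · calc ((s.card : ℤ) - 2) * a ≤ ∑ _i ∈ s, a := by rw [Finset.sum_const, nsmul_eq_mul]; linarith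
      _ ≤ ∑ i ∈ s, f i := Finset.sum_le_sum ha

section Counting

variable {V : Type*} [Finite V] {m : ℕ}

lemma sum_ncard_blockPart_le {N : ℕ} (S : Set (V × Fin N)) (t : ℕ) :
    ∑ k ∈ Finset.range t, (blockPart S m k).ncard ≤ S.ncard :=
  (Finset.sum_le_sum fun _ _ => Set.ncard_image_le (Set.toFinite _)).trans
    (S.sum_ncard_inter_fiber_le _ _)

lemma card_mul_le_sum_ncard_closedNbhd_blockPart {t : ℕ} {H : SimpleGraph V}
    {S : Set (V × Fin (t * m))} (hS : IsDomSet (H □ pathGraph (t * m)) S) :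
    Nat.card V * (t * m) ≤
      ∑ k ∈ Finset.range t, (closedNbhd (H □ pathGraph (m + 2)) (blockPart S m k)).ncard := by
  let D (k : ℕ) : Set (V × Fin (t * m)) :=
    blockWindow m k ∩ toBlock m k ⁻¹' closedNbhd (H □ pathGraph (m + 2)) (blockPart S m k)
  have hcover : Set.univ ⊆ ⋃ k ∈ Finset.range t, D k := by
    intro v _
    obtain ⟨u, hu, huv⟩ := hS.exists_mem_eq_or_adj v
    have hm : 0 < m := Nat.pos_of_mul_pos_left (Nat.zero_lt_of_lt v.2.isLt)
    obtain ⟨hu', h₁, h₂⟩ := mem_blockWindow_of_div_eq (k := u.2 / m) hm rfl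
    have hrow := snd_le_succ_of_eq_or_adj huv
    have hv : v ∈ blockWindow m (u.2 / m) := ⟨by omega, by omega⟩
    refine Set.mem_biUnion (Finset.mem_range.mpr ((Nat.div_lt_iff_lt_mul hm).mpr u.2.isLt))
      ⟨hv, toBlock_mem_closedNbhd ⟨hu, rfl⟩ hu' hv huv⟩
  calc Nat.card V * (t * m) = (Set.univ : Set (V × Fin (t * m))).ncard := by
        rw [Set.ncard_univ, Nat.card_prod, Nat.card_fin]
    _ ≤ (⋃ k ∈ Finset.range t, D k).ncard := Set.ncard_le_ncard hcover (Set.toFinite _)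
    _ ≤ ∑ k ∈ Finset.range t, (D k).ncard := Finset.set_ncard_biUnion_le _ _
    _ ≤ _ := Finset.sum_le_sum fun k _ => Set.ncard_le_ncard_of_injOn (toBlock m k)
        (fun _ hq => hq.2) (injOn_toBlock.mono Set.inter_subset_left)

end Counting

theorem stmt12_general (n m t : ℕ) (hm : 1 ≤ m) (ht : 2 ≤ t) (a : ℤ)
    (hA : ∀ A : Set (Fin n × Fin (m + 2)),
      (∀ v ∈ A, 1 ≤ (v.2 : ℕ) ∧ (v.2 : ℕ) ≤ m) →
      (∀ v : Fin n × Fin (m + 2), 2 ≤ (v.2 : ℕ) → (v.2 : ℕ) ≤ m - 1 →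
        v ∈ closedNbhd (cycleGraph n □ pathGraph (m + 2)) A) →
      waste (cycleGraph n □ pathGraph (m + 2)) A ≥ a)
    (S : Set (Fin n × Fin (t * m))) (hS : IsDomSet (cycleGraph n □ pathGraph (t * m)) S) :
    (S.ncard : ℚ) ≥ ((t : ℚ) * m * n + ((t : ℚ) - 2) * a) / 5 := by
  classical
  let w (k : ℕ) := waste (cycleGraph n □ pathGraph (m + 2)) (blockPart S m k)
  have hblock : ∀ k ∈ Finset.range t, k * m + m ≤ t * m := fun k hk => by
    simpa [Nat.succ_mul] using Nat.mul_le_mul_right m (Finset.mem_range.mp hk)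
  have hlower : ((t : ℤ) - 2) * a ≤ ∑ k ∈ Finset.range t, w k := by
    simpa using sub_two_mul_le_sum (s := Finset.range t) (by simpa using ht)
      (fun k hk => hA _ (blockPart_rows hm S) (mem_closedNbhd_blockPart hS (hblock k hk)))
      (fun k _ => waste_nonneg _ degree_cycleGraph_boxProd_pathGraph_le _)
  have hupper : ∑ k ∈ Finset.range t, w k ≤ 5 * S.ncard - n * (t * m) := by
    have h₁ := sum_ncard_blockPart_le (m := m) S t
    have h₂ := card_mul_le_sum_ncard_closedNbhd_blockPart (H := cycleGraph n) hS
    rw [Nat.card_fin] at h₂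
    zify at h₁ h₂
    simp only [w, waste, Finset.sum_sub_distrib, ← Finset.mul_sum]
    linarith
  have key := (Int.cast_le (R := ℚ)).mpr (hlower.trans hupper)
  push_cast at key
  rw [ge_iff_le, div_le_iff₀ (by norm_num)]
  linarith

theorem stmt12 (n m t : ℕ) (hn : 3 ≤ n) (hm : 1 ≤ m) (ht : 2 ≤ t) (a : ℤ)
    (hA : ∀ A : Set (Fin n × Fin (m + 2)),
      (∀ v ∈ A, 1 ≤ (v.2 : ℕ) ∧ (v.2 : ℕ) ≤ m) →
      (∀ v : Fin n × Fin (m + 2), 2 ≤ (v.2 : ℕ) → (v.2 : ℕ) ≤ m - 1 →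
        v ∈ closedNbhd (cycleGraph n □ pathGraph (m + 2)) A) →
      waste (cycleGraph n □ pathGraph (m + 2)) A ≥ a)
    (S : Set (Fin n × Fin (t * m))) (hS : IsDomSet (cycleGraph n □ pathGraph (t * m)) S) :
    (S.ncard : ℚ) ≥ ((t : ℚ) * m * n + ((t : ℚ) - 2) * a) / 5 :=
  stmt12_general n m t hm ht a hA S hS
end
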